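/- For all real u, v, the second metric coefficient of the coordinate system on H² equals G(u,v): −(∂_v y1(u,v))^2 + (∂_v y2(u,v))^2 + (∂_v y3(u,v))^2 = ((7+4√3)e^{−2(u+v)} + (97+56√3)e^{2(u+v)})/(52+30√3) − 1. -/
import Mathlib


open Real

/-- `y1(u,v) = (1/(1+√3))[e^{−u−v} + (2+√3)e^{u+v}]` -/
noncomputable def y1 (u v : ℝ) : ℝ :=
  (1 / (1 + Real.sqrt 3)) * (Real.exp (-u - v) + (2 + Real.sqrt 3) * Real.exp (u + v))

/-- `y2(u,v)` from the paper. -/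
noncomputable def y2 (u v : ℝ) : ℝ :=
  (1 / (4 * (1 + Real.sqrt 3))) *
    ((-2 * Real.exp (-u - v) + (6 + 4 * Real.sqrt 3) * Real.exp (u + v)) * Real.cos v
      - 2 * (Real.sqrt 3 * Real.exp (-u - v) + (2 + Real.sqrt 3) * Real.exp (u + v)) * Real.sin v)

/-- `y3(u,v)` from the paper. -/
noncomputable def y3 (u v : ℝ) : ℝ :=
  (1 / (4 * (2 + Real.sqrt 3))) *
    (((3 + Real.sqrt 3) * Real.exp (-u - v) + (5 + 3 * Real.sqrt 3) * Real.exp (u + v)) * Real.cos v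
      + ((-1 - Real.sqrt 3) * Real.exp (-u - v) + (9 + 5 * Real.sqrt 3) * Real.exp (u + v)) * Real.sin v)

lemma exp_neg_hasDeriv (u v : ℝ) :
    HasDerivAt (fun t : ℝ => Real.exp (-u - t)) (Real.exp (-u - v) * (-1)) v := by
  have h : HasDerivAt (fun t : ℝ => -u - t) (-1) v := by
    simpa using (hasDerivAt_id v).const_sub (-u)
  exact h.exp

lemma exp_pos_hasDeriv (u v : ℝ) :
    HasDerivAt (fun t : ℝ => Real.exp (u + t)) (Real.exp (u + v) * 1) v := by
  have h : HasDerivAt (fun t : ℝ => u + t) 1 v := by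
    simpa using (hasDerivAt_id v).const_add u
  exact h.exp

/-- the second metric coefficient of the coordinate system on `H²` equals
`G(u,v) = ((7+4√3)e^{−2(u+v)} + (97+56√3)e^{2(u+v)})/(52+30√3) − 1`. -/
theorem hyperboloid_second_metric_coefficient :
    ∀ u v : ℝ,
      -(deriv (fun t => y1 u t) v) ^ 2 + (deriv (fun t => y2 u t) v) ^ 2
        + (deriv (fun t => y3 u t) v) ^ 2
        = ((7 + 4 * Real.sqrt 3) * Real.exp (-2 * (u + v))
            + (97 + 56 * Real.sqrt 3) * Real.exp (2 * (u + v))) / (52 + 30 * Real.sqrt 3) - 1 := by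
  intro u v
  have ha := exp_neg_hasDeriv u v
  have hb := exp_pos_hasDeriv u v
  have hcos : HasDerivAt Real.cos (-Real.sin v) v := Real.hasDerivAt_cos v
  have hsin : HasDerivAt Real.sin (Real.cos v) v := Real.hasDerivAt_sin v
  set s := Real.sqrt 3 with hsdef
  set a := Real.exp (-u - v) with hadef
  set b := Real.exp (u + v) with hbdef
  set c := Real.cos v with hcdef
  set t := Real.sin v with htdef
  have hs : s ^ 2 = 3 := Real.sq_sqrt (by norm_num)
  have hs0 : 0 ≤ s := Real.sqrt_nonneg 3
  have hct : c ^ 2 + t ^ 2 = 1 := by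
    rw [hcdef, htdef]; exact Real.cos_sq_add_sin_sq v
  have hab : a * b = 1 := by
    rw [hadef, hbdef, ← Real.exp_add]
    norm_num
  have H1 : deriv (fun t => y1 u t) v
      = (1 / (1 + s)) * (a * (-1) + (2 + s) * (b * 1)) := by
    refine HasDerivAt.deriv ?_
    unfold y1
    exact (ha.add (hb.const_mul (2 + s))).const_mul (1 / (1 + s))
  have H2 : deriv (fun t => y2 u t) v
      = (1 / (4 * (1 + s))) *
          ((((-2) * (a * (-1)) + (6 + 4 * s) * (b * 1)) * c
              + ((-2) * a + (6 + 4 * s) * b) * (-t))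
            - ((2 * (s * (a * (-1)) + (2 + s) * (b * 1))) * t
              + (2 * (s * a + (2 + s) * b)) * c)) := by
    refine HasDerivAt.deriv ?_
    unfold y2
    exact ((((ha.const_mul (-2)).add (hb.const_mul (6 + 4 * s))).mul hcos).sub
      ((((ha.const_mul s).add (hb.const_mul (2 + s))).const_mul 2).mul hsin)).const_mul
      (1 / (4 * (1 + s)))
  have H3 : deriv (fun t => y3 u t) v
      = (1 / (4 * (2 + s))) *
          ((((3 + s) * (a * (-1)) + (5 + 3 * s) * (b * 1)) * c
              + ((3 + s) * a + (5 + 3 * s) * b) * (-t))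
            + ((((-1) - s) * (a * (-1)) + (9 + 5 * s) * (b * 1)) * t
              + (((-1) - s) * a + (9 + 5 * s) * b) * c)) := by
    refine HasDerivAt.deriv ?_
    unfold y3
    exact ((((ha.const_mul (3 + s)).add (hb.const_mul (5 + 3 * s))).mul hcos).add
      ((((ha.const_mul ((-1) - s)).add (hb.const_mul (9 + 5 * s))).mul hsin))).const_mul
      (1 / (4 * (2 + s)))
  have hA2 : Real.exp (-2 * (u + v)) = a * a := by
    rw [hadef, ← Real.exp_add]; congr 1; ring
  have hB2 : Real.exp (2 * (u + v)) = b * b := by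
    rw [hbdef, ← Real.exp_add]; congr 1; ring
  have hq1 : 1 / (1 + s) = (s - 1) / 2 := by
    rw [div_eq_div_iff (by positivity) (by norm_num)]
    linear_combination (-1 : ℝ) * hs
  have hq2 : 1 / (4 * (1 + s)) = (s - 1) / 8 := by
    rw [div_eq_div_iff (by positivity) (by norm_num)]
    linear_combination (-4 : ℝ) * hs
  have hq3 : 1 / (4 * (2 + s)) = (2 - s) / 4 := by
    rw [div_eq_div_iff (by positivity) (by norm_num)]
    linear_combination (4 : ℝ) * hs
  have hq4 : ((7 + 4 * s) * (a * a) + (97 + 56 * s) * (b * b)) / (52 + 30 * s)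
      = ((7 + 4 * s) * (a * a) + (97 + 56 * s) * (b * b)) * (52 - 30 * s) / 4 := by
    rw [div_eq_div_iff (by positivity) (by norm_num)]
    linear_combination (900 * ((7 + 4 * s) * (a * a) + (97 + 56 * s) * (b * b))) * hs
  rw [H1, H2, H3, hA2, hB2, hq1, hq2, hq3, hq4]
  linear_combination
    (420 * b ^ 2 + (119 / 4) * a ^ 2 + (-19 / 16) * t ^ 2 * b ^ 2 + (7 / 8) * t ^ 2 * a * b
      + (5 / 16) * t ^ 2 * a ^ 2 + (-73 / 8) * c * t * b ^ 2 + (15 / 2) * c * t * a * b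
      + (-11 / 8) * c * t * a ^ 2 + (-251 / 16) * c ^ 2 * b ^ 2 + (69 / 8) * c ^ 2 * a * b
      + (-11 / 16) * c ^ 2 * a ^ 2 + (-1 / 2) * s * b ^ 2 + (1 / 2) * s * a * b
      + (3 / 4) * s * t ^ 2 * b ^ 2 + (-3 / 4) * s * t ^ 2 * a * b
      + (-3 / 4) * s * c * t * b ^ 2 + (-5 / 2) * s * c * t * a * b
      + (3 / 4) * s * c * t * a ^ 2 + (-2) * s * c ^ 2 * b ^ 2 + (3 / 4) * s * c ^ 2 * a * b
      + (-1 / 4) * s * c ^ 2 * a ^ 2 + (-1 / 4) * s ^ 2 * b ^ 2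
      + (13 / 16) * s ^ 2 * t ^ 2 * b ^ 2 + (-3 / 8) * s ^ 2 * t ^ 2 * a * b
      + (1 / 16) * s ^ 2 * t ^ 2 * a ^ 2 + (13 / 8) * s ^ 2 * c * t * b ^ 2
      + (-1 / 8) * s ^ 2 * c * t * a ^ 2 + (65 / 16) * s ^ 2 * c ^ 2 * b ^ 2
      + (-17 / 8) * s ^ 2 * c ^ 2 * a * b + (5 / 16) * s ^ 2 * c ^ 2 * a ^ 2) * hs
    + (-2 + 2 * b ^ 2 + 2 * a ^ 2 + s * b ^ 2 - s * a ^ 2) * hct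
    + (1 - 2 * t ^ 2 - 2 * c ^ 2) * hab
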